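/- For every x > 0, f(x) < x/(1 + x²). -/

import Mathlib

open Real MeasureTheory Finset

/-- Density of the standard normal distribution. -/
noncomputable def stdPdf (x : ℝ) : ℝ := Real.exp (-x ^ 2 / 2) / Real.sqrt (2 * Real.pi)

/-- Cumulative distribution function of the standard normal distribution. -/
noncomputable def stdCdf (x : ℝ) : ℝ := ∫ t in Set.Iic x, stdPdf t

/-- The Mills ratio. -/
noncomputable def mills (x : ℝ) : ℝ := (1 - stdCdf x) / stdPdf x

/-- The function `f(x) = x - x² M(x)`. -/
noncomputable def fMills (x : ℝ) : ℝ := x - x ^ 2 * mills x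

/-- `μ`, the supremum of `f` over `[0, ∞)`. -/
noncomputable def muMills : ℝ := sSup (fMills '' Set.Ici 0)

/-- The probability simplex. -/
def probSimplex (n : ℕ) : Set (Fin n → ℝ) :=
  {p | (∀ i, 0 ≤ p i) ∧ ∑ i, p i = 1}

/-- The positive probability simplex. -/
def probSimplexPos (n : ℕ) : Set (Fin n → ℝ) :=
  {p | (∀ i, 0 < p i) ∧ ∑ i, p i = 1}

/-- Expected number of connected components of Ross's random graph. -/
noncomputable def EC {n : ℕ} (p : Fin n → ℝ) : ℝ :=
  ∑ S ∈ (Finset.univ : Finset (Fin n)).powerset.filter (fun S => S.Nonempty),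
    (S.card - 1).factorial * ∏ j ∈ S, p j

/-- The total variation distance. -/
noncomputable def TV {n : ℕ} (p q : Fin n → ℝ) : ℝ := (∑ i, |p i - q i|) / 2

/-- The decreasing rearrangement of a vector. -/
noncomputable def decRearrange {n : ℕ} (x : Fin n → ℝ) : Fin n → ℝ :=
  fun j => x (Tuple.sort x j.rev)

/-- `Majorizes x y` means `x ≻ y`. -/
def Majorizes {n : ℕ} (x y : Fin n → ℝ) : Prop :=
  (∀ k : ℕ, ∑ j ∈ Finset.univ.filter (fun j : Fin n => (j : ℕ) < k), decRearrange y j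
      ≤ ∑ j ∈ Finset.univ.filter (fun j : Fin n => (j : ℕ) < k), decRearrange x j)
  ∧ ∑ j, x j = ∑ j, y j

/-- The coefficients `c_{k,m}`. -/
noncomputable def ckm (m k : ℕ) : ℝ := (m.choose k) * (k + 1).factorial / (m : ℝ) ^ k

/-- The sum `S_m(s)`. -/
noncomputable def Sm (m : ℕ) (s : ℝ) : ℝ := ∑ k ∈ Finset.Icc 1 m, ckm m k * (1 - s) ^ (k - 1)

/-- The quantity `B_m(s)`. -/
noncomputable def Bm (m : ℕ) (s : ℝ) : ℝ := s * ∑ k ∈ Finset.Icc 1 m, ckm m k * (1 - s) ^ k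

/-! Gordon's bound on the Mills ratio: `G(y) = Φ(y) + y φ(y) / (1 + y²)` has derivative
`2 φ(y) / (1 + y²)² > 0` (using `φ' = -y φ`) and tends to `1` at `+∞`, so `G < 1` everywhere,
which says exactly `x / (1 + x²) < M(x)`. Multiplying by `x² > 0`,
`f(x) < x - x³ / (1 + x²) = x / (1 + x²)`. -/

open Filter Topology ProbabilityTheory

lemma stdPdf_eq_gaussianPDFReal : stdPdf = gaussianPDFReal 0 1 := by
  ext x
  simp [stdPdf, gaussianPDFReal, div_eq_inv_mul]

lemma stdPdf_pos (x : ℝ) : 0 < stdPdf x := by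
  rw [stdPdf_eq_gaussianPDFReal]; exact gaussianPDFReal_pos _ _ _ one_ne_zero

lemma integrable_stdPdf : Integrable stdPdf :=
  stdPdf_eq_gaussianPDFReal ▸ integrable_gaussianPDFReal 0 1

lemma integral_stdPdf : ∫ x, stdPdf x = 1 :=
  stdPdf_eq_gaussianPDFReal ▸ integral_gaussianPDFReal_eq_one 0 one_ne_zero

lemma continuous_stdPdf : Continuous stdPdf := by
  unfold stdPdf; fun_prop

lemma hasDerivAt_stdPdf (x : ℝ) : HasDerivAt stdPdf (-x * stdPdf x) x := by
  have h : HasDerivAt (fun y : ℝ => -y ^ 2 / 2) (-x) x :=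
    ((hasDerivAt_pow 2 x).neg.div_const 2).congr_deriv (by norm_num; ring)
  exact (h.exp.div_const _).congr_deriv (by rw [stdPdf]; ring)

lemma hasDerivAt_stdCdf (x : ℝ) : HasDerivAt stdCdf (stdPdf x) x := by
  have hcdf : stdCdf = fun y => stdCdf 0 + ∫ t in (0 : ℝ)..y, stdPdf t := by
    ext y
    rw [← intervalIntegral.integral_Iic_sub_Iic integrable_stdPdf.integrableOn
      integrable_stdPdf.integrableOn, stdCdf, stdCdf]
    ring
  rw [hcdf]
  exact (intervalIntegral.integral_hasDerivAt_right integrable_stdPdf.intervalIntegrable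
    (continuous_stdPdf.stronglyMeasurableAtFilter _ _) continuous_stdPdf.continuousAt).const_add _

lemma tendsto_stdCdf_atTop : Tendsto stdCdf atTop (𝓝 1) :=
  integral_stdPdf ▸ (aecover_Iic tendsto_id).integral_tendsto_of_countably_generated
    integrable_stdPdf

lemma tendsto_stdPdf_atTop : Tendsto stdPdf atTop (𝓝 0) := by
  have h : Tendsto (fun y : ℝ => -y ^ 2 / 2) atTop atBot :=
    (tendsto_neg_atTop_atBot.comp (tendsto_pow_atTop two_ne_zero)).atBot_div_const two_pos
  rw [← zero_div (√(2 * π))]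
  exact (tendsto_exp_atBot.comp h).div_const _

noncomputable def gordonFun (y : ℝ) : ℝ := stdCdf y + y * stdPdf y / (1 + y ^ 2)

lemma hasDerivAt_gordonFun (y : ℝ) :
    HasDerivAt gordonFun (2 * stdPdf y / (1 + y ^ 2) ^ 2) y := by
  have hnum : HasDerivAt (fun z => z * stdPdf z) (stdPdf y + y * (-y * stdPdf y)) y :=
    ((hasDerivAt_id' y).mul (hasDerivAt_stdPdf y)).congr_deriv (by ring)
  have hden : HasDerivAt (fun z : ℝ => 1 + z ^ 2) (2 * y) y := by
    simpa using (hasDerivAt_pow 2 y).const_add 1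
  refine ((hasDerivAt_stdCdf y).add (hnum.div hden (by positivity))).congr_deriv ?_
  field_simp
  ring

lemma strictMono_gordonFun : StrictMono gordonFun :=
  strictMono_of_deriv_pos fun y => by
    rw [(hasDerivAt_gordonFun y).deriv]
    have := stdPdf_pos y
    positivity

lemma tendsto_gordonFun_atTop : Tendsto gordonFun atTop (𝓝 1) := by
  have htail : Tendsto (fun y => y * stdPdf y / (1 + y ^ 2)) atTop (𝓝 0) := by
    refine squeeze_zero' ?_ (Eventually.of_forall fun y => ?_)
      (by simpa using tendsto_stdPdf_atTop.div_const 2)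
    · filter_upwards [eventually_ge_atTop 0] with y hy
      have := stdPdf_pos y
      positivity
    · have := stdPdf_pos y
      rw [div_le_div_iff₀ (by positivity) two_pos]
      nlinarith [mul_nonneg this.le (sq_nonneg (y - 1))]
  rw [← add_zero 1]
  exact tendsto_stdCdf_atTop.add htail

lemma gordonFun_lt_one (y : ℝ) : gordonFun y < 1 :=
  (strictMono_gordonFun (lt_add_one y)).trans_le
    (strictMono_gordonFun.monotone.ge_of_tendsto tendsto_gordonFun_atTop _)

lemma div_one_add_sq_lt_mills (x : ℝ) : x / (1 + x ^ 2) < mills x := by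
  have hG := gordonFun_lt_one x
  rw [gordonFun] at hG
  rw [mills, lt_div_iff₀ (stdPdf_pos x), div_mul_eq_mul_div]
  linarith

/-- For all `x > 0`, `f(x) < x / (1 + x²)`. -/
theorem fMills_lt (x : ℝ) (hx : 0 < x) : fMills x < x / (1 + x ^ 2) :=
  calc fMills x = x - x ^ 2 * mills x := rfl
    _ < x - x ^ 2 * (x / (1 + x ^ 2)) := by gcongr; exact div_one_add_sq_lt_mills x
    _ = x / (1 + x ^ 2) := by field_simp; ring
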